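/- For any probability measures μ and ν on X and any classifiers h, h₁, h₂ ∈ H, the one-step transfer inequality holds: R'(h, h₁, μ) ≤ R'(h, h₂, ν) + Ψ(μ, ν) + R'(h₁, h₂, ν). -/

import Mathlib

open MeasureTheory Finset

/-- `R'(f, g, μ) = ∫ τ(f(x), g(x)) dμ(x)`. -/
noncomputable def Rp {X Y : Type*} [MeasurableSpace X] (τ : Y → Y → ℝ)
    (f g : X → Y) (μ : Measure X) : ℝ := ∫ x, τ (f x) (g x) ∂μ

/-- Discrepancy distance `Ψ(μ, ν)` w.r.t. loss `τ` and hypothesis class `H`. -/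
noncomputable def disc {X Y : Type*} [MeasurableSpace X] (τ : Y → Y → ℝ)
    (H : Set (X → Y)) (μ ν : Measure X) : ℝ :=
  sSup {r : ℝ | ∃ h ∈ H, ∃ h' ∈ H,
    r = |(∫ x, τ (h' x) (h x) ∂μ) - ∫ x, τ (h' x) (h x) ∂ν|}

/-!
The pair `(h, h₁)` occurs in the supremum defining `Ψ`, which is finite because `τ` takes values
in `[0, M']`; so `R'(h, h₁, μ) ≤ R'(h, h₁, ν) + Ψ(μ, ν)`. Integrating the triangle inequality
for `τ` against `ν` gives `R'(h, h₁, ν) ≤ R'(h, h₂, ν) + R'(h₂, h₁, ν)`, and symmetry of `τ`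
turns the last term into `R'(h₁, h₂, ν)`.
-/

section

variable {X Y : Type*} [MeasurableSpace X]

lemma abs_integral_sub_integral_le {μ ν : Measure X} [IsProbabilityMeasure μ]
    [IsProbabilityMeasure ν] {f : X → ℝ} {M : ℝ} (hf₀ : 0 ≤ f) (hfM : ∀ x, f x ≤ M) :
    |∫ x, f x ∂μ - ∫ x, f x ∂ν| ≤ M := by
  have integral_le (κ : Measure X) [IsProbabilityMeasure κ] : ∫ x, f x ∂κ ≤ M := by
    have hnorm : ‖∫ x, f x ∂κ‖ ≤ M * κ.real Set.univ :=
      norm_integral_le_of_norm_le_const <| ae_of_all _ fun x => by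
        rw [Real.norm_of_nonneg (hf₀ x)]
        exact hfM x
    rw [probReal_univ, mul_one] at hnorm
    exact (le_abs_self _).trans hnorm
  exact abs_sub_le_of_nonneg_of_le (integral_nonneg hf₀) (integral_le μ)
    (integral_nonneg hf₀) (integral_le ν)

lemma abs_Rp_sub_Rp_le_disc {τ : Y → Y → ℝ} {M : ℝ} (hτ : ∀ y y', 0 ≤ τ y y' ∧ τ y y' ≤ M)
    {H : Set (X → Y)} {μ ν : Measure X} [IsProbabilityMeasure μ] [IsProbabilityMeasure ν]
    {f g : X → Y} (hf : f ∈ H) (hg : g ∈ H) :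
    |Rp τ f g μ - Rp τ f g ν| ≤ disc τ H μ ν := by
  refine le_csSup ⟨M, ?_⟩ ⟨g, hg, f, hf, rfl⟩
  rintro r ⟨-, -, -, -, rfl⟩
  exact abs_integral_sub_integral_le (fun _ => (hτ _ _).1) fun _ => (hτ _ _).2

lemma Rp_comm {τ : Y → Y → ℝ} (hsym : ∀ y y', τ y y' = τ y' y) (f g : X → Y) (μ : Measure X) :
    Rp τ f g μ = Rp τ g f μ :=
  integral_congr_ae <| ae_of_all _ fun _ => hsym _ _

lemma Rp_le_Rp_add_Rp {τ : Y → Y → ℝ} (hτ₀ : ∀ y y', 0 ≤ τ y y')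
    (htri : ∀ y y' y'', τ y y'' ≤ τ y y' + τ y' y'') {μ : Measure X} {f g k : X → Y}
    (hfk : Integrable (fun x => τ (f x) (k x)) μ) (hkg : Integrable (fun x => τ (k x) (g x)) μ) :
    Rp τ f g μ ≤ Rp τ f k μ + Rp τ k g μ := by
  rw [Rp, Rp, Rp, ← integral_add hfk hkg]
  exact integral_mono_of_nonneg (ae_of_all _ fun _ => hτ₀ _ _) (hfk.add hkg)
    (ae_of_all _ fun _ => htri _ _ _)

end

theorem one_step_transfer_general {X Y : Type*} [MeasurableSpace X]
    (τ : Y → Y → ℝ) (M' : ℝ)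
    (hbd : ∀ y y' : Y, 0 ≤ τ y y' ∧ τ y y' ≤ M')
    (hsym : ∀ y y' : Y, τ y y' = τ y' y)
    (htri : ∀ y y' y'' : Y, τ y y'' ≤ τ y y' + τ y' y'')
    (H : Set (X → Y))
    (μ ν : Measure X) [IsProbabilityMeasure μ] [IsProbabilityMeasure ν]
    (hMeas : ∀ p ∈ H, ∀ q ∈ H, Measurable fun x => τ (p x) (q x))
    (h h₁ h₂ : X → Y) (hhH : h ∈ H) (h₁H : h₁ ∈ H) (h₂H : h₂ ∈ H) :
    Rp τ h h₁ μ ≤ Rp τ h h₂ ν + disc τ H μ ν + Rp τ h₁ h₂ ν := by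
  have hint : ∀ p ∈ H, ∀ q ∈ H, Integrable (fun x => τ (p x) (q x)) ν := fun p hp q hq =>
    .of_bound (hMeas p hp q hq).aestronglyMeasurable M' <| ae_of_all _ fun x => by
      rw [Real.norm_of_nonneg (hbd _ _).1]
      exact (hbd _ _).2
  have htransfer : Rp τ h h₁ μ - Rp τ h h₁ ν ≤ disc τ H μ ν :=
    (abs_le.mp (abs_Rp_sub_Rp_le_disc hbd hhH h₁H)).2
  have hsplit : Rp τ h h₁ ν ≤ Rp τ h h₂ ν + Rp τ h₂ h₁ ν :=
    Rp_le_Rp_add_Rp (fun y y' => (hbd y y').1) htri (hint h hhH h₂ h₂H) (hint h₂ h₂H h₁ h₁H)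
  rw [Rp_comm hsym h₂] at hsplit
  linarith

/-- one-step transfer inequality
`R'(h, h₁, μ) ≤ R'(h, h₂, ν) + Ψ(μ, ν) + R'(h₁, h₂, ν)`. -/
theorem one_step_transfer {X Y : Type*} [MeasurableSpace X]
    (τ : Y → Y → ℝ) (M' : ℝ) (hM : 0 < M')
    (hbd : ∀ y y' : Y, 0 ≤ τ y y' ∧ τ y y' ≤ M')
    (hsym : ∀ y y' : Y, τ y y' = τ y' y)
    (htri : ∀ y y' y'' : Y, τ y y'' ≤ τ y y' + τ y' y'')
    (H : Set (X → Y)) (hH : H.Nonempty)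
    (μ ν : Measure X) [IsProbabilityMeasure μ] [IsProbabilityMeasure ν]
    (hMeas : ∀ p ∈ H, ∀ q ∈ H, Measurable fun x => τ (p x) (q x))
    (h h₁ h₂ : X → Y) (hhH : h ∈ H) (h₁H : h₁ ∈ H) (h₂H : h₂ ∈ H) :
    Rp τ h h₁ μ ≤ Rp τ h h₂ ν + disc τ H μ ν + Rp τ h₁ h₂ ν :=
  one_step_transfer_general τ M' hbd hsym htri H μ ν hMeas h h₁ h₂ hhH h₁H h₂H
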